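/- arXiv:2005.03572 — 2 statements merged into one kernel-verified Lean document; each statement's English description precedes it below -/
import Mathlib

section
/- Let N : ℕ and let X : Fin N → Fin N → Bool be strictly upper triangular. Then the original-NMS keep vector is a fixed point of the Cluster-NMS update: step nms = nms. -/
/-- The Cluster-NMS update: `(clusterStep X b) j = true` iff there is no index `i`
with `b i = true` and `X i j = true`. -/
def clusterStep {N : ℕ} (X : Fin N → Fin N → Bool) (b : Fin N → Bool) : Fin N → Bool :=
  fun j => decide (¬ ∃ i : Fin N, b i = true ∧ X i j = true)

/-- Auxiliary strong recursion for original NMS: box `n` is kept iff there is no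
kept box `m < n` with `X m n = true`. -/
def origNMSAux {N : ℕ} (X : Fin N → Fin N → Bool) : (n : ℕ) → n < N → Bool :=
  fun n hn =>
    decide (∀ m : Fin n,
      ¬ (origNMSAux X m.1 (m.2.trans hn) = true ∧ X ⟨m.1, m.2.trans hn⟩ ⟨n, hn⟩ = true))
termination_by n => n
decreasing_by all_goals exact Fin.is_lt _

/-- The original-NMS keep vector: `origNMS X j = true` iff there is no `i < j`
with `origNMS X i = true` and `X i j = true`. -/
def origNMS {N : ℕ} (X : Fin N → Fin N → Bool) : Fin N → Bool :=
  fun j => origNMSAux X j.1 j.2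

theorem origNMS_eq_true_iff {N : ℕ} (X : Fin N → Fin N → Bool) (j : Fin N) :
    origNMS X j = true ↔ ∀ i < j, origNMS X i = true → X i j = false := by
  rw [origNMS, origNMSAux]
  simp only [decide_eq_true_eq, not_and, Bool.not_eq_true]
  exact ⟨fun h i hij => h ⟨i, hij⟩, fun h m => h ⟨m, m.2.trans j.2⟩ m.2⟩

theorem clusterStep_eq_true_iff {N : ℕ} (X : Fin N → Fin N → Bool) (b : Fin N → Bool)
    (j : Fin N) : clusterStep X b j = true ↔ ∀ i, b i = true → X i j = false := by
  simp [clusterStep]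

theorem clusterStep_eq_true_iff_of_strictUpper {N : ℕ} {X : Fin N → Fin N → Bool}
    (hX : ∀ i j : Fin N, j ≤ i → X i j = false) (b : Fin N → Bool) (j : Fin N) :
    clusterStep X b j = true ↔ ∀ i < j, b i = true → X i j = false := by
  rw [clusterStep_eq_true_iff]
  refine ⟨fun h i _ => h i, fun h i hi => ?_⟩
  rcases lt_or_ge i j with hij | hji
  · exact h i hij hi
  · exact hX i j hji

/-- For a strictly upper triangular Boolean IoU matrix `X`, the original-NMS keep
vector is a fixed point of the Cluster-NMS update. -/
theorem origNMS_fixedPoint {N : ℕ} (X : Fin N → Fin N → Bool)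
    (hX : ∀ i j : Fin N, j ≤ i → X i j = false) :
    clusterStep X (origNMS X) = origNMS X := by
  funext j
  rw [Bool.eq_iff_iff, clusterStep_eq_true_iff_of_strictUpper hX, origNMS_eq_true_iff]
end

section
/- Let N : ℕ, let X : Fin N → Fin N → Bool be strictly upper triangular, and let M : ℕ. Define adjacency adj i j ↔ (X i j = true ∨ X j i = true), and say two indices are in the same cluster if they are related by the reflexive–transitive closure of adj. If for every i : Fin N the cluster containing i (the finite set {j : Fin N | i and j are in the same cluster}) has cardinality at most M, then M iterations of Cluster-NMS suffice: step^[M] (fun _ => true) = nms. (The paper's discussion after Proposition 1: if the largest cluster contains M boxes, the vector b does not change after M iterations and equals the original NMS result, since different clusters are processed in parallel.) -/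
section

variable {N : ℕ} {X : Fin N → Fin N → Bool}

def nmsAncestors (X : Fin N → Fin N → Bool) (j : Fin N) : Set (Fin N) :=
  {i | Relation.ReflTransGen (fun a b => X a b = true) i j}

theorem lt_of_strictUpper (hX : ∀ i j : Fin N, j ≤ i → X i j = false) {i j : Fin N}
    (h : X i j = true) : i < j := by
  by_contra hji
  simp [hX i j (not_lt.1 hji)] at h

theorem le_of_mem_nmsAncestors (hX : ∀ i j : Fin N, j ≤ i → X i j = false) {i j : Fin N}
    (h : i ∈ nmsAncestors X j) : i ≤ j := by
  induction h with
  | refl => exact le_rfl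
  | tail _ hbc ih => exact ih.trans (lt_of_strictUpper hX hbc).le

theorem nmsAncestors_ssubset (hX : ∀ i j : Fin N, j ≤ i → X i j = false) {i j : Fin N}
    (h : X i j = true) : nmsAncestors X i ⊂ nmsAncestors X j := by
  have hsub : nmsAncestors X i ⊆ nmsAncestors X j := fun a ha => Relation.ReflTransGen.tail ha h
  refine (Set.ssubset_iff_of_subset hsub).2 ⟨j, Relation.ReflTransGen.refl, fun hj => ?_⟩
  exact (le_of_mem_nmsAncestors hX hj).not_gt (lt_of_strictUpper hX h)

theorem nmsAncestors_subset_cluster (j : Fin N) :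
    nmsAncestors X j ⊆
      {i | Relation.ReflTransGen (fun a b : Fin N => X a b = true ∨ X b a = true) j i} :=
  fun _ hi => Relation.ReflTransGen.mono (fun _ _ => Or.inr) _ _ (Relation.ReflTransGen.swap _ _ hi)

theorem clusterStep_apply_congr {b b' : Fin N → Bool} {j : Fin N}
    (h : ∀ i, X i j = true → b i = b' i) : clusterStep X b j = clusterStep X b' j := by
  simp only [clusterStep, decide_eq_decide]
  exact not_congr <| exists_congr fun i => ⟨fun ⟨hb, hx⟩ => ⟨h i hx ▸ hb, hx⟩,
    fun ⟨hb, hx⟩ => ⟨(h i hx).symm ▸ hb, hx⟩⟩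

theorem clusterStep_origNMS (hX : ∀ i j : Fin N, j ≤ i → X i j = false) :
    clusterStep X (origNMS X) = origNMS X := by
  funext j
  change _ = origNMSAux X j.1 j.2
  rw [origNMSAux, clusterStep, decide_eq_decide]
  constructor
  · intro h m hm
    exact h ⟨⟨m.1, m.2.trans j.2⟩, hm⟩
  · rintro h ⟨i, hi, hxi⟩
    exact h ⟨i.1, lt_of_strictUpper hX hxi⟩ ⟨hi, hxi⟩

theorem iterate_clusterStep_apply_eq_origNMS (hX : ∀ i j : Fin N, j ≤ i → X i j = false)
    (k : ℕ) {j : Fin N} (hj : (nmsAncestors X j).ncard ≤ k) :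
    (clusterStep X)^[k] (fun _ => true) j = origNMS X j := by
  induction k generalizing j with
  | zero =>
    have : 0 < (nmsAncestors X j).ncard := (Set.ncard_pos).2 ⟨j, Relation.ReflTransGen.refl⟩
    omega
  | succ k ih =>
    rw [Function.iterate_succ_apply', ← clusterStep_origNMS hX]
    refine clusterStep_apply_congr fun i hij => ih ?_
    have := Set.ncard_lt_ncard (nmsAncestors_ssubset hX hij)
    omega

end

/-- If every cluster of boxes (a cluster is an equivalence class of the
reflexive–transitive closure of the adjacency `adj i j ↔ X i j = true ∨ X j i = true`)
has at most `M` boxes, then `M` iterations of Cluster-NMS suffice to recover the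
original NMS result. -/
theorem clusterNMS_stops_after_cluster_size {N M : ℕ} (X : Fin N → Fin N → Bool)
    (hX : ∀ i j : Fin N, j ≤ i → X i j = false)
    (hM : ∀ i : Fin N,
      Set.ncard {j : Fin N |
        Relation.ReflTransGen (fun a b : Fin N => X a b = true ∨ X b a = true) i j} ≤ M) :
    (clusterStep X)^[M] (fun _ => true) = origNMS X := by
  funext j
  exact iterate_clusterStep_apply_eq_origNMS hX M
    ((Set.ncard_le_ncard (nmsAncestors_subset_cluster j)).trans (hM j))
end
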